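/- arXiv:2602.13221 — 2 statements merged into one kernel-verified Lean document; each statement's English description precedes it below -/
import Mathlib

section
/- Let g = A_{4,12} be the real Lie algebra with basis e₁,e₂,e₃,e₄ and brackets [e₁,e₃]=e₁, [e₂,e₃]=e₂, [e₁,e₄]=-e₂, [e₂,e₄]=e₁. Define the linear map J by Je₁=e₂, Je₂=-e₁, Je₃=e₄, Je₄=-e₃. Then J²=-Id and J is abelian: [Jx,Jy]=[x,y] for all x,y ∈ g. -/
theorem stmt5 (br : (Fin 4 → ℝ) →ₗ[ℝ] (Fin 4 → ℝ) →ₗ[ℝ] (Fin 4 → ℝ))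
    (e : Fin 4 → (Fin 4 → ℝ)) (he : ∀ i, e i = Pi.single i 1)
    (hanti : ∀ x y, br x y = -br y x)
    (h13 : br (e 0) (e 2) = e 0) (h23 : br (e 1) (e 2) = e 1)
    (h14 : br (e 0) (e 3) = -e 1) (h24 : br (e 1) (e 3) = e 0)
    (h12 : br (e 0) (e 1) = 0) (h34 : br (e 2) (e 3) = 0)
    (J : (Fin 4 → ℝ) →ₗ[ℝ] (Fin 4 → ℝ))
    (hJ1 : J (e 0) = e 1) (hJ2 : J (e 1) = -e 0)
    (hJ3 : J (e 2) = e 3) (hJ4 : J (e 3) = -e 2) :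
    (∀ x, J (J x) = -x) ∧ (∀ x y, br (J x) (J y) = br x y) := by
  have hx : ∀ x : Fin 4 → ℝ, x = x 0 • e 0 + x 1 • e 1 + x 2 • e 2 + x 3 • e 3 := by
    intro x
    funext j
    fin_cases j <;> simp [he, Pi.single_apply]
  have hdiag : ∀ x, br x x = 0 := by
    intro x
    have h := hanti x x
    have h2 : br x x + br x x = 0 := by nth_rewrite 2 [h]; simp
    have h3 : (2 : ℝ) • br x x = 0 := by rw [two_smul]; exact h2
    simpa using h3
  have h21 : br (e 1) (e 0) = 0 := by rw [hanti, h12]; simp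
  have h31 : br (e 2) (e 0) = -e 0 := by rw [hanti, h13]
  have h32 : br (e 2) (e 1) = -e 1 := by rw [hanti, h23]
  have h41 : br (e 3) (e 0) = e 1 := by rw [hanti, h14]; simp
  have h42 : br (e 3) (e 1) = -e 0 := by rw [hanti, h24]
  have h43 : br (e 3) (e 2) = 0 := by rw [hanti, h34]; simp
  have h00 := hdiag (e 0); have h11 := hdiag (e 1)
  have h22 := hdiag (e 2); have h33 := hdiag (e 3)
  constructor
  · intro x
    rw [hx x]
    simp only [map_add, map_smul, map_neg, hJ1, hJ2, hJ3, hJ4, smul_neg]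
    module
  · intro x y
    rw [hx x, hx y]
    simp only [map_add, map_smul, hJ1, hJ2, hJ3, hJ4, map_neg, smul_neg,
      LinearMap.add_apply, LinearMap.smul_apply, LinearMap.neg_apply,
      h12, h13, h14, h23, h24, h34, h21, h31, h32, h41, h42, h43,
      h00, h11, h22, h33]
    module
end

section
/- Let g be the 6-dimensional Lie algebra A_{6,4} with non-zero brackets [e₅,e₆]=e₁, [e₅,e₃]=e₂, [e₆,e₄]=e₂. Define the linear map J by Je₁=e₂, Je₂=-e₁, Je₃=e₄, Je₄=-e₃, Je₅=e₆, Je₆=-e₅. Then J²=-Id and J is abelian: [Jx,Jy]=[x,y] for all x,y ∈ g; hence the Nijenhuis tensor of J vanishes. -/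
set_option maxHeartbeats 1000000


theorem stmt16 (br : (Fin 6 → ℝ) →ₗ[ℝ] (Fin 6 → ℝ) →ₗ[ℝ] (Fin 6 → ℝ))
    (e : Fin 6 → (Fin 6 → ℝ)) (he : ∀ i, e i = Pi.single i 1)
    (hanti : ∀ x y, br x y = -br y x)
    (h56 : br (e 4) (e 5) = e 0) (h53 : br (e 4) (e 2) = e 1)
    (h64 : br (e 5) (e 3) = e 1)
    (z01 : br (e 0) (e 1) = 0) (z02 : br (e 0) (e 2) = 0)
    (z03 : br (e 0) (e 3) = 0) (z04 : br (e 0) (e 4) = 0)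
    (z05 : br (e 0) (e 5) = 0) (z12 : br (e 1) (e 2) = 0)
    (z13 : br (e 1) (e 3) = 0) (z14 : br (e 1) (e 4) = 0)
    (z15 : br (e 1) (e 5) = 0) (z23 : br (e 2) (e 3) = 0)
    (z25 : br (e 2) (e 5) = 0) (z34 : br (e 3) (e 4) = 0)
    (J : (Fin 6 → ℝ) →ₗ[ℝ] (Fin 6 → ℝ))
    (hJ1 : J (e 0) = e 1) (hJ2 : J (e 1) = -e 0)
    (hJ3 : J (e 2) = e 3) (hJ4 : J (e 3) = -e 2)
    (hJ5 : J (e 4) = e 5) (hJ6 : J (e 5) = -e 4) :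
    (∀ x, J (J x) = -x) ∧ (∀ x y, br (J x) (J y) = br x y) ∧
    (∀ x y, br x y + J (br (J x) y + br x (J y)) - br (J x) (J y) = 0) := by
  have hx : ∀ x : Fin 6 → ℝ,
      x = x 0 • e 0 + x 1 • e 1 + x 2 • e 2 + x 3 • e 3 + x 4 • e 4 + x 5 • e 5 := by
    intro x; funext j; fin_cases j <;> simp [he]
  have hself : ∀ x, br x x = 0 := by
    intro x
    have h := hanti x x
    have h2 : br x x + br x x = 0 := by nth_rewrite 2 [h]; simp
    have h3 : (2:ℝ) • br x x = 0 := by rw [two_smul]; exact h2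
    simpa using (smul_eq_zero.mp h3).resolve_left (by norm_num)
  have z10 : br (e 1) (e 0) = 0 := by rw [hanti, z01]; simp
  have z20 : br (e 2) (e 0) = 0 := by rw [hanti, z02]; simp
  have z30 : br (e 3) (e 0) = 0 := by rw [hanti, z03]; simp
  have z40 : br (e 4) (e 0) = 0 := by rw [hanti, z04]; simp
  have z50 : br (e 5) (e 0) = 0 := by rw [hanti, z05]; simp
  have z21 : br (e 2) (e 1) = 0 := by rw [hanti, z12]; simp
  have z31 : br (e 3) (e 1) = 0 := by rw [hanti, z13]; simp
  have z41 : br (e 4) (e 1) = 0 := by rw [hanti, z14]; simp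
  have z51 : br (e 5) (e 1) = 0 := by rw [hanti, z15]; simp
  have z32 : br (e 3) (e 2) = 0 := by rw [hanti, z23]; simp
  have z52 : br (e 5) (e 2) = 0 := by rw [hanti, z25]; simp
  have z43 : br (e 4) (e 3) = 0 := by rw [hanti, z34]; simp
  have h65 : br (e 5) (e 4) = -e 0 := by rw [hanti, h56]
  have h24 : br (e 2) (e 4) = -e 1 := by rw [hanti, h53]
  have h35 : br (e 3) (e 5) = -e 1 := by rw [hanti, h64]
  have hex : ∀ x : Fin 6 → ℝ, ∃ a0 a1 a2 a3 a4 a5 : ℝ,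
      x = a0 • e 0 + a1 • e 1 + a2 • e 2 + a3 • e 3 + a4 • e 4 + a5 • e 5 :=
    fun x => ⟨x 0, x 1, x 2, x 3, x 4, x 5, hx x⟩
  refine ⟨?_, ?_, ?_⟩
  · intro x
    obtain ⟨a0, a1, a2, a3, a4, a5, rfl⟩ := hex x
    simp only [map_add, map_smul, map_neg, neg_neg, hJ1, hJ2, hJ3, hJ4, hJ5, hJ6]
    funext j; fin_cases j <;> simp [he] <;> ring
  · intro x y
    obtain ⟨a0, a1, a2, a3, a4, a5, rfl⟩ := hex x
    obtain ⟨b0, b1, b2, b3, b4, b5, rfl⟩ := hex y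
    simp only [map_add, map_smul, LinearMap.add_apply, LinearMap.smul_apply,
      hJ1, hJ2, hJ3, hJ4, hJ5, hJ6, map_neg, LinearMap.neg_apply,
      h56, h53, h64, h65, h24, h35, z01, z02, z03, z04, z05, z12, z13, z14, z15,
      z23, z25, z34, z10, z20, z30, z40, z50, z21, z31, z41, z51, z32, z52, z43,
      hself, smul_zero, smul_neg, neg_neg, neg_zero, add_zero, zero_add, smul_smul, smul_add]
    funext j; fin_cases j <;> simp [he] <;> ring
  · intro x y
    obtain ⟨a0, a1, a2, a3, a4, a5, rfl⟩ := hex x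
    obtain ⟨b0, b1, b2, b3, b4, b5, rfl⟩ := hex y
    simp only [map_add, map_smul, LinearMap.add_apply, LinearMap.smul_apply,
      hJ1, hJ2, hJ3, hJ4, hJ5, hJ6, map_neg, LinearMap.neg_apply,
      h56, h53, h64, h65, h24, h35, z01, z02, z03, z04, z05, z12, z13, z14, z15,
      z23, z25, z34, z10, z20, z30, z40, z50, z21, z31, z41, z51, z32, z52, z43,
      hself, smul_zero, smul_neg, neg_neg, neg_zero, add_zero, zero_add, smul_smul, smul_add]
    funext j; fin_cases j <;> simp [he] <;> ring
end
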